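/- arXiv:2509.07972 — 2 statements merged into one kernel-verified Lean document; each statement's English description precedes it below -/
import Mathlib

section
/- Define f : ℝ² → ℝ by f(w) = (1/2)(log 2 + log(1 + exp(w₁³w₂)) − w₁³w₂ + w₁² + w₂²). Then: (i) for every ρ with 0 ≤ ρ < 2 and all constants L₀, L_ρ ≥ 0, f is not (ρ, L₀, L_ρ)-smooth, i.e. there exists w ∈ ℝ² with ‖∇²f(w)‖ > L₀ + L_ρ‖∇f(w)‖^ρ; (ii) f is bounded below with f* = inf f > −∞, and for every ρ ≥ 3 there exist K₀, K_ρ > 0 such that f is (ρ, K₀, K_ρ)-smooth, i.e. ‖∇²f(w)‖ ≤ K₀ + K_ρ(f(w) − f*)^ρ for all w ∈ ℝ². -/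
/-!
Along the axis `w = (c, 0)` the gradient is `(c, -c³/4)`, of size `O(c³)`, while the second
diagonal entry of the Hessian is `1 + c⁶/8`; this rules out `(ρ, L₀, L_ρ)`-smoothness for `ρ < 2`.
Conversely every Hessian entry is a polynomial of degree at most six in `w` times a bounded
function of the sigmoid, so `‖∇²f(w)‖ ≤ 2 (1 + ‖w‖²)³`, while the ridge term gives
`‖w‖² ≤ 2 (f(w) - f*) + 1`. Hence `‖∇²f‖` is bounded by a cubic in `f - f*`, and so by
`K₀ + K_ρ (f - f*)^ρ` once `ρ ≥ 3`.
-/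

open Real Filter EuclideanSpace

noncomputable section

namespace Real

lemma hasDerivAt_log_one_add_exp (u : ℝ) :
    HasDerivAt (fun u => log (1 + exp u)) (sigmoid u) u := by
  convert ((hasDerivAt_exp u).const_add 1).log (by positivity) using 1
  rw [sigmoid_def, exp_neg]
  field_simp
  ring

lemma le_log_one_add_exp (u : ℝ) : u ≤ log (1 + exp u) := by
  simpa using log_le_log (exp_pos u) (le_add_of_nonneg_left zero_le_one)

lemma sigmoid_mul_one_sub_nonneg (u : ℝ) : 0 ≤ sigmoid u * (1 - sigmoid u) :=
  mul_nonneg (sigmoid_nonneg u) (sub_nonneg.2 (sigmoid_le_one u))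

lemma sigmoid_mul_one_sub_le (u : ℝ) : sigmoid u * (1 - sigmoid u) ≤ 1 / 4 := by
  nlinarith [sq_nonneg (2 * sigmoid u - 1)]

lemma eventually_add_mul_rpow_lt_rpow {ρ σ : ℝ} (hρ : 0 ≤ ρ) (hρσ : ρ < σ) (A B : ℝ) :
    ∀ᶠ x in atTop, A + B * x ^ ρ < x ^ σ := by
  filter_upwards [(tendsto_rpow_atTop (sub_pos.2 hρσ)).eventually_gt_atTop (|A| + |B|),
    eventually_ge_atTop 1] with x hgap hx
  have hxρ : 1 ≤ x ^ ρ := one_le_rpow hx hρ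
  calc A + B * x ^ ρ ≤ (|A| + |B|) * x ^ ρ := by
        nlinarith [le_abs_self A, le_abs_self B, abs_nonneg A]
    _ < x ^ (σ - ρ) * x ^ ρ := by gcongr
    _ = x ^ σ := by rw [← rpow_add (by positivity), sub_add_cancel]

lemma rpow_le_one_add_rpow {x a b : ℝ} (hx : 0 ≤ x) (ha : 0 ≤ a) (hab : a ≤ b) :
    x ^ a ≤ 1 + x ^ b := by
  rcases le_total x 1 with hx1 | hx1
  · linarith [rpow_le_one hx hx1 ha, rpow_nonneg hx b]
  · linarith [rpow_le_rpow_of_exponent_le hx1 hab]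

end Real

namespace LinearRNNLoss

local notation "ℝ²" => EuclideanSpace ℝ (Fin 2)
local notation "dw₀" => (proj 0 : StrongDual ℝ ℝ²)
local notation "dw₁" => (proj 1 : StrongDual ℝ ℝ²)
local notation "e₀" => (single 0 1 : ℝ²)
local notation "e₁" => (single 1 1 : ℝ²)

lemma norm_smul_proj_add_smul_proj_le (α β : ℝ) :
    ‖α • dw₀ + β • dw₁‖ ≤ |α| + |β| := by
  have norm_proj_le (i : Fin 2) : ‖(proj i : StrongDual ℝ ℝ²)‖ ≤ 1 :=
    ContinuousLinearMap.opNorm_le_bound _ zero_le_one fun v => by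
      simpa using PiLp.norm_apply_le v i
  calc _ ≤ ‖α‖ * ‖dw₀‖ + ‖β‖ * ‖dw₁‖ :=
        (norm_add_le _ _).trans (by rw [norm_smul, norm_smul])
    _ ≤ |α| * 1 + |β| * 1 := by gcongr <;> simp [norm_proj_le]
    _ = |α| + |β| := by ring

/-- The pre-activation `w₁³ w₂` of the recurrent network. -/
def preact (w : ℝ²) : ℝ := w 0 ^ 3 * w 1

def loss (w : ℝ²) : ℝ :=
  (1 / 2) * (log 2 + log (1 + exp (preact w)) - preact w + w 0 ^ 2 + w 1 ^ 2)

def gradX (w : ℝ²) : ℝ := w 0 - 3 / 2 * w 0 ^ 2 * w 1 * (1 - sigmoid (preact w))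

def gradY (w : ℝ²) : ℝ := w 1 - 1 / 2 * w 0 ^ 3 * (1 - sigmoid (preact w))

def grad (w : ℝ²) : ℝ² := gradX w • e₀ + gradY w • e₁

def hessXX (w : ℝ²) : ℝ :=
  1 - 3 * w 0 * w 1 * (1 - sigmoid (preact w)) +
    9 / 2 * w 0 ^ 4 * w 1 ^ 2 * (sigmoid (preact w) * (1 - sigmoid (preact w)))

def hessXY (w : ℝ²) : ℝ :=
  -(3 / 2) * w 0 ^ 2 * (1 - sigmoid (preact w)) +
    3 / 2 * w 0 ^ 5 * w 1 * (sigmoid (preact w) * (1 - sigmoid (preact w)))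

def hessYY (w : ℝ²) : ℝ :=
  1 + 1 / 2 * w 0 ^ 6 * (sigmoid (preact w) * (1 - sigmoid (preact w)))

def hess (w : ℝ²) : ℝ² →L[ℝ] ℝ² :=
  (hessXX w • dw₀ + hessXY w • dw₁).smulRight e₀ +
    (hessXY w • dw₀ + hessYY w • dw₁).smulRight e₁

section Derivatives

variable (w : ℝ²)

lemma hasFDerivAt_coord (i : Fin 2) :
    HasFDerivAt (fun w : ℝ² => w i) (proj i : StrongDual ℝ ℝ²) w :=
  (proj i : StrongDual ℝ ℝ²).hasFDerivAt

lemma hasFDerivAt_preact :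
    HasFDerivAt preact ((3 * w 0 ^ 2 * w 1) • dw₀ + w 0 ^ 3 • dw₁) w := by
  refine (((hasFDerivAt_coord w 0).pow 3).mul (hasFDerivAt_coord w 1)).congr_fderiv ?_
  ext v
  simp
  ring

lemma hasFDerivAt_one_sub_sigmoid_preact :
    HasFDerivAt (fun w => 1 - sigmoid (preact w))
      (-(sigmoid (preact w) * (1 - sigmoid (preact w))) •
        ((3 * w 0 ^ 2 * w 1) • dw₀ + w 0 ^ 3 • dw₁)) w := by
  refine (((hasDerivAt_sigmoid (preact w)).comp_hasFDerivAt w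
    (hasFDerivAt_preact w)).const_sub 1).congr_fderiv ?_
  rw [neg_smul]

lemma hasGradientAt_loss : HasGradientAt loss (grad w) w := by
  rw [hasGradientAt_iff_hasFDerivAt]
  have hsoftplus := (hasDerivAt_log_one_add_exp (preact w)).comp_hasFDerivAt w
    (hasFDerivAt_preact w)
  refine (((((hsoftplus.const_add (log 2)).sub (hasFDerivAt_preact w)).add
    ((hasFDerivAt_coord w 0).pow 2)).add ((hasFDerivAt_coord w 1).pow 2)).const_mul
    (1 / 2)).congr_fderiv ?_
  ext v
  simp [grad, gradX, gradY, PiLp.inner_apply]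
  ring

lemma hasFDerivAt_gradX : HasFDerivAt gradX (hessXX w • dw₀ + hessXY w • dw₁) w := by
  refine ((hasFDerivAt_coord w 0).sub (((((hasFDerivAt_coord w 0).pow 2).const_mul (3 / 2)).mul
    (hasFDerivAt_coord w 1)).mul (hasFDerivAt_one_sub_sigmoid_preact w))).congr_fderiv ?_
  ext v
  simp [hessXX, hessXY]
  ring

lemma hasFDerivAt_gradY : HasFDerivAt gradY (hessXY w • dw₀ + hessYY w • dw₁) w := by
  refine ((hasFDerivAt_coord w 1).sub ((((hasFDerivAt_coord w 0).pow 3).const_mul (1 / 2)).mul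
    (hasFDerivAt_one_sub_sigmoid_preact w))).congr_fderiv ?_
  ext v
  simp [hessXY, hessYY]
  ring

lemma hasFDerivAt_grad : HasFDerivAt grad (hess w) w :=
  ((hasFDerivAt_gradX w).smul_const _).add ((hasFDerivAt_gradY w).smul_const _)

end Derivatives

lemma norm_hess_le_entries (w : ℝ²) :
    ‖hess w‖ ≤ |hessXX w| + 2 * |hessXY w| + |hessYY w| := by
  refine (norm_add_le _ _).trans ?_
  simp only [ContinuousLinearMap.norm_smulRight_apply, PiLp.norm_single, norm_one,
    mul_one]
  linarith [norm_smul_proj_add_smul_proj_le (hessXX w) (hessXY w),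
    norm_smul_proj_add_smul_proj_le (hessXY w) (hessYY w)]

lemma abs_hessYY_le_norm_hess (w : ℝ²) : |hessYY w| ≤ ‖hess w‖ :=
  calc |hessYY w| = ‖hess w e₁ 1‖ := by simp [hess]
    _ ≤ ‖hess w e₁‖ := PiLp.norm_apply_le _ _
    _ ≤ ‖hess w‖ * ‖e₁‖ := (hess w).le_opNorm _
    _ = ‖hess w‖ := by simp

lemma norm_grad_le (w : ℝ²) : ‖grad w‖ ≤ |gradX w| + |gradY w| := by
  rw [grad]
  refine (norm_add_le _ _).trans_eq ?_
  simp [norm_smul]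

lemma abs_coord_le_norm (w : ℝ²) (i : Fin 2) : |w i| ≤ ‖w‖ := PiLp.norm_apply_le w i

section EntryBounds

variable {w : ℝ²}

lemma abs_hessXX_le : |hessXX w| ≤ 1 + 3 * ‖w‖ ^ 2 + 9 / 8 * ‖w‖ ^ 6 := by
  have hx := abs_coord_le_norm w 0
  have hy := abs_coord_le_norm w 1
  have hs := sigmoid_le_one (preact w)
  have hτ := sigmoid_mul_one_sub_le (preact w)
  have hτ₀ := sigmoid_mul_one_sub_nonneg (preact w)
  calc |hessXX w| ≤ 1 + 3 * |w 0| * |w 1| * (1 - sigmoid (preact w)) +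
        9 / 2 * |w 0| ^ 4 * |w 1| ^ 2 * (sigmoid (preact w) * (1 - sigmoid (preact w))) := by
        refine (abs_add_le _ _).trans (add_le_add ((abs_sub _ _).trans (add_le_add ?_ ?_)) ?_) <;>
        norm_num [abs_mul, abs_of_nonneg, hs, hτ₀]
    _ ≤ 1 + 3 * ‖w‖ * ‖w‖ * 1 + 9 / 2 * ‖w‖ ^ 4 * ‖w‖ ^ 2 * (1 / 4) := by
        gcongr
        linarith [sigmoid_nonneg (preact w)]
    _ = 1 + 3 * ‖w‖ ^ 2 + 9 / 8 * ‖w‖ ^ 6 := by ring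

lemma abs_hessXY_le : |hessXY w| ≤ 3 / 2 * ‖w‖ ^ 2 + 3 / 8 * ‖w‖ ^ 6 := by
  have hx := abs_coord_le_norm w 0
  have hy := abs_coord_le_norm w 1
  have hs := sigmoid_le_one (preact w)
  have hτ := sigmoid_mul_one_sub_le (preact w)
  have hτ₀ := sigmoid_mul_one_sub_nonneg (preact w)
  calc |hessXY w| ≤ 3 / 2 * |w 0| ^ 2 * (1 - sigmoid (preact w)) +
        3 / 2 * |w 0| ^ 5 * |w 1| * (sigmoid (preact w) * (1 - sigmoid (preact w))) := by
        refine (abs_add_le _ _).trans (add_le_add ?_ ?_) <;>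
        norm_num [abs_mul, abs_of_nonneg, hs, hτ₀]
    _ ≤ 3 / 2 * ‖w‖ ^ 2 * 1 + 3 / 2 * ‖w‖ ^ 5 * ‖w‖ * (1 / 4) := by
        gcongr
        linarith [sigmoid_nonneg (preact w)]
    _ = 3 / 2 * ‖w‖ ^ 2 + 3 / 8 * ‖w‖ ^ 6 := by ring

lemma abs_hessYY_le : |hessYY w| ≤ 1 + 1 / 8 * ‖w‖ ^ 6 := by
  have hx := abs_coord_le_norm w 0
  have hτ := sigmoid_mul_one_sub_le (preact w)
  have hτ₀ := sigmoid_mul_one_sub_nonneg (preact w)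
  calc |hessYY w| = 1 + 1 / 2 * |w 0| ^ 6 * (sigmoid (preact w) * (1 - sigmoid (preact w))) := by
        rw [hessYY, abs_of_nonneg (by positivity), (by decide : Even 6).pow_abs]
    _ ≤ 1 + 1 / 2 * ‖w‖ ^ 6 * (1 / 4) := by gcongr
    _ = 1 + 1 / 8 * ‖w‖ ^ 6 := by ring

end EntryBounds

lemma norm_hess_le (w : ℝ²) : ‖hess w‖ ≤ 2 * (1 + ‖w‖ ^ 2) ^ 3 := by
  nlinarith [norm_hess_le_entries w, abs_hessXX_le (w := w), abs_hessXY_le (w := w),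
    abs_hessYY_le (w := w), pow_nonneg (sq_nonneg ‖w‖) 2]

lemma loss_ge (w : ℝ²) : (log 2 + ‖w‖ ^ 2) / 2 ≤ loss w := by
  rw [loss, EuclideanSpace.real_norm_sq_eq, Fin.sum_univ_two]
  linarith [le_log_one_add_exp (preact w)]

lemma loss_zero : loss 0 = log 2 := by
  norm_num [loss, preact]
  ring

lemma isGLB_sInf_range_loss : IsGLB (Set.range loss) (sInf (Set.range loss)) :=
  Real.isGLB_sInf (Set.range_nonempty loss) ⟨log 2 / 2, by
    rintro _ ⟨w, rfl⟩
    linarith [loss_ge w, sq_nonneg ‖w‖]⟩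

lemma gradX_smul_e₀ (c : ℝ) : gradX (c • e₀) = c := by
  simp [gradX]

lemma gradY_smul_e₀ (c : ℝ) : gradY (c • e₀) = -(c ^ 3 / 4) := by
  simp [gradY, preact]
  ring

lemma hessYY_smul_e₀ (c : ℝ) : hessYY (c • e₀) = 1 + c ^ 6 / 8 := by
  simp [hessYY, preact]
  ring

lemma exists_lt_norm_hess {ρ : ℝ} (hρ₀ : 0 ≤ ρ) (hρ₂ : ρ < 2) (L₀ : ℝ) {Lρ : ℝ} (hLρ : 0 ≤ Lρ) :
    ∃ w : ℝ², L₀ + Lρ * ‖grad w‖ ^ ρ < ‖hess w‖ := by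
  obtain ⟨c, hc, hc₂⟩ := ((eventually_add_mul_rpow_lt_rpow (by positivity : 0 ≤ 3 * ρ)
    (by linarith : 3 * ρ < 6) (8 * L₀) (8 * Lρ)).and (eventually_ge_atTop 2)).exists
  refine ⟨c • e₀, ?_⟩
  have hgrad : ‖grad (c • e₀)‖ ≤ c ^ 3 := by
    refine (norm_grad_le _).trans ?_
    rw [gradX_smul_e₀, gradY_smul_e₀, abs_neg, abs_of_nonneg (by positivity),
      abs_of_nonneg (by positivity)]
    nlinarith [mul_le_mul_of_nonneg_left (show 4 ≤ c ^ 2 by nlinarith) (by linarith : 0 ≤ c)]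
  have hgradρ : ‖grad (c • e₀)‖ ^ ρ ≤ c ^ (3 * ρ) := by
    rw [rpow_mul (by positivity)]
    exact rpow_le_rpow (norm_nonneg _) (by exact_mod_cast hgrad) hρ₀
  calc L₀ + Lρ * ‖grad (c • e₀)‖ ^ ρ ≤ L₀ + Lρ * c ^ (3 * ρ) := by gcongr
    _ < 1 + c ^ 6 / 8 := by norm_num at hc; linarith
    _ = |hessYY (c • e₀)| := by rw [hessYY_smul_e₀, abs_of_nonneg (by positivity)]
    _ ≤ ‖hess (c • e₀)‖ := abs_hessYY_le_norm_hess _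

lemma norm_hess_le_rpow {ρ : ℝ} (hρ : 3 ≤ ρ) (w : ℝ²) :
    ‖hess w‖ ≤ 128 + 64 * (loss w - sInf (Set.range loss)) ^ ρ := by
  set D := loss w - sInf (Set.range loss)
  have hD : 0 ≤ D := sub_nonneg.2 (isGLB_sInf_range_loss.1 ⟨w, rfl⟩)
  have hinf : sInf (Set.range loss) ≤ log 2 := loss_zero ▸ isGLB_sInf_range_loss.1 ⟨0, rfl⟩
  have hw : 1 + ‖w‖ ^ 2 ≤ 2 * (1 + D) := by linarith [loss_ge w, log_two_lt_d9]
  have hD₃ : D ^ 3 ≤ 1 + D ^ ρ := by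
    simpa using rpow_le_one_add_rpow hD (by norm_num : (0 : ℝ) ≤ 3) hρ
  calc ‖hess w‖ ≤ 2 * (1 + ‖w‖ ^ 2) ^ 3 := norm_hess_le w
    _ ≤ 2 * (2 * (1 + D)) ^ 3 := by gcongr
    _ ≤ 64 * (1 + D ^ 3) := by nlinarith [mul_nonneg (sq_nonneg (1 - D)) hD]
    _ ≤ 128 + 64 * D ^ ρ := by linarith

end LinearRNNLoss

open LinearRNNLoss in
/-- Recurrent network example. The loss
`f(w) = ½(log 2 + log(1 + exp(w₁³w₂)) − w₁³w₂ + w₁² + w₂²)` on `ℝ²` is not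
`(ρ, L₀, L_ρ)`-smooth for any `0 ≤ ρ < 2`, but is bounded below and
`(ρ, K₀, K_ρ)`-smooth for every `ρ ≥ 3` with some `K₀, K_ρ > 0`. -/
theorem statement16
    (f : EuclideanSpace ℝ (Fin 2) → ℝ)
    (hfdef : ∀ w : EuclideanSpace ℝ (Fin 2),
      f w = (1 / 2) * (Real.log 2 + Real.log (1 + Real.exp ((w 0) ^ 3 * w 1)) -
        (w 0) ^ 3 * w 1 + (w 0) ^ 2 + (w 1) ^ 2)) :
    (∀ ρ : ℝ, 0 ≤ ρ → ρ < 2 → ∀ L0 Lρ : ℝ, 0 ≤ L0 → 0 ≤ Lρ →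
      ∃ w : EuclideanSpace ℝ (Fin 2),
        L0 + Lρ * ‖gradient f w‖ ^ ρ < ‖fderiv ℝ (gradient f) w‖) ∧
    (∃ fstar : ℝ, IsGLB (Set.range f) fstar ∧
      ∀ ρ : ℝ, 3 ≤ ρ → ∃ K0 Kρ : ℝ, 0 < K0 ∧ 0 < Kρ ∧
        ∀ w : EuclideanSpace ℝ (Fin 2),
          ‖fderiv ℝ (gradient f) w‖ ≤ K0 + Kρ * (f w - fstar) ^ ρ) := by
  obtain rfl : f = loss := funext hfdef
  have hgrad : gradient loss = grad := gradient_eq hasGradientAt_loss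
  have hhess : fderiv ℝ grad = hess := funext fun w => (hasFDerivAt_grad w).fderiv
  rw [hgrad, hhess]
  exact ⟨fun ρ hρ₀ hρ₂ L0 _ _ hLρ => exists_lt_norm_hess hρ₀ hρ₂ L0 hLρ,
    sInf (Set.range loss), isGLB_sInf_range_loss,
    fun ρ hρ => ⟨128, 64, by norm_num, by norm_num, norm_hess_le_rpow hρ⟩⟩
end
end

section
/- Fix K₁ > 0 and define h : ℝ → ℝ by h(x) = e^{−√K₁·x − 1} − 1/2 for x < −1/√K₁, h(x) = (K₁/2)x² for −1/√K₁ ≤ x ≤ 1/√K₁, and h(x) = e^{√K₁·x − 1} − 1/2 for x > 1/√K₁, and define f : ℝ² → ℝ by f(x, y) = h(x) + (K₁/2)y². Then f is twice continuously differentiable, f(x, y) ≥ 0 for all (x, y) with inf f = f* = 0, and ‖∇²f(x, y)‖ = max{|h''(x)|, K₁} ≤ K₁ + K₁·f(x, y) for all (x, y) ∈ ℝ²; i.e. f is (1, K₁, K₁)-smooth. -/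
/-
`h` is `C²` because its three branches agree to second order at `x = ±1/√K₁`: with `s = √K₁`,
value `1/2`, slope `±s` and curvature `K₁`. Outside the valley `h'' = K₁ e^{s|x| - 1}
= K₁ (h + 1/2)`, and inside `h'' = K₁`; in both cases `h'' ≤ K₁ + K₁ h`. Since `f` is a sum of
functions of the separate coordinates, its Hessian is the diagonal matrix `diag (h''(x), K₁)`,
whose operator norm is `max |h''(x)| K₁`.
-/

open Real Set

theorem hasDerivAt_ite_le {F G F' G' : ℝ → ℝ} {c : ℝ}
    (hF : ∀ x, HasDerivAt F (F' x) x) (hG : ∀ x, HasDerivAt G (G' x) x)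
    (hc : F c = G c) (hc' : F' c = G' c) (x : ℝ) :
    HasDerivAt (fun y => if y ≤ c then F y else G y) (if x ≤ c then F' x else G' x) x := by
  rcases lt_trichotomy x c with hx | rfl | hx
  · rw [if_pos hx.le]
    refine (hF x).congr_of_eventuallyEq ?_
    filter_upwards [Iio_mem_nhds hx] with y hy using if_pos hy.le
  · have hleft : HasDerivWithinAt (fun y => if y ≤ x then F y else G y) (F' x) (Iic x) x :=
      (hF x).hasDerivWithinAt.congr (fun y hy => if_pos hy) (if_pos le_rfl)
    have hright : HasDerivWithinAt (fun y => if y ≤ x then F y else G y) (G' x) (Ici x) x := by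
      refine (hG x).hasDerivWithinAt.congr (fun y (hy : x ≤ y) => ?_) (by simp [hc])
      rcases hy.eq_or_lt with rfl | hy
      · simp [hc]
      · exact if_neg hy.not_ge
    have h := hleft.union (hc' ▸ hright)
    rw [Iic_union_Ici, hasDerivWithinAt_univ] at h
    simpa using h
  · rw [if_neg hx.not_ge]
    refine (hG x).congr_of_eventuallyEq ?_
    filter_upwards [Ioi_mem_nhds hx] with y hy using if_neg (not_le.2 hy)

theorem hasDerivAt_exp_mul_sub_one (a x : ℝ) :
    HasDerivAt (fun y => exp (a * y - 1)) (a * exp (a * x - 1)) x := by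
  simpa [mul_comm] using (((hasDerivAt_id x).const_mul a).sub_const 1).exp

theorem hasDerivAt_half_mul_sq (c x : ℝ) : HasDerivAt (fun y => c / 2 * y ^ 2) (c * x) x :=
  ((hasDerivAt_pow 2 x).const_mul (c / 2)).congr_deriv (by ring)

theorem one_le_exp_mul_sub_one {a x : ℝ} (ha : 0 < a) (hx : 1 / a ≤ x) :
    1 ≤ exp (a * x - 1) := by
  rw [one_le_exp_iff, sub_nonneg, ← div_le_iff₀' ha]
  exact hx

section SeparableSum

variable {ι : Type*} [Fintype ι] {g g' g'' : ι → ℝ → ℝ}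

theorem hasGradientAt_sum_apply (hg : ∀ i x, HasDerivAt (g i) (g' i x) x)
    (w : EuclideanSpace ℝ ι) :
    HasGradientAt (fun w : EuclideanSpace ℝ ι => ∑ i, g i (w i))
      (WithLp.toLp 2 fun i => g' i (w i)) w := by
  have hsum : HasFDerivAt (fun w : EuclideanSpace ℝ ι => ∑ i, g i (w i))
      (∑ i, g' i (w i) • EuclideanSpace.proj (𝕜 := ℝ) i) w :=
    HasFDerivAt.fun_sum fun i _ =>
      (hg i (w i)).comp_hasFDerivAt w (EuclideanSpace.proj (𝕜 := ℝ) i).hasFDerivAt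
  rw [hasGradientAt_iff_hasFDerivAt]
  refine hsum.congr_fderiv ?_
  ext v
  simp [PiLp.inner_apply, mul_comm]

theorem hasFDerivAt_toLp_apply [DecidableEq ι] (hg' : ∀ i x, HasDerivAt (g' i) (g'' i x) x)
    (w : EuclideanSpace ℝ ι) :
    HasFDerivAt (fun w : EuclideanSpace ℝ ι => WithLp.toLp 2 fun i => g' i (w i))
      (Matrix.toEuclideanCLM (n := ι) (𝕜 := ℝ) (Matrix.diagonal fun i => g'' i (w i))) w := by
  have hcoord := hasFDerivAt_pi.2 fun i =>
    (hg' i (w i)).comp_hasFDerivAt w (EuclideanSpace.proj (𝕜 := ℝ) i).hasFDerivAt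
  refine ((PiLp.continuousLinearEquiv 2 ℝ fun _ : ι => ℝ).symm.hasFDerivAt.comp w
    hcoord).congr_fderiv ?_
  ext v i
  simp [Matrix.mulVec_diagonal]

theorem contDiff_sum_apply {n : WithTop ℕ∞} (hg : ∀ i, ContDiff ℝ n (g i)) :
    ContDiff ℝ n fun w : EuclideanSpace ℝ ι => ∑ i, g i (w i) :=
  ContDiff.sum fun i _ => (hg i).comp (EuclideanSpace.proj (𝕜 := ℝ) i).contDiff

open scoped Matrix.Norms.L2Operator in
theorem norm_fderiv_gradient_sum_apply [DecidableEq ι]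
    (hg : ∀ i x, HasDerivAt (g i) (g' i x) x) (hg' : ∀ i x, HasDerivAt (g' i) (g'' i x) x)
    (w : EuclideanSpace ℝ ι) :
    ‖fderiv ℝ (gradient fun w : EuclideanSpace ℝ ι => ∑ i, g i (w i)) w‖ =
      ‖fun i => g'' i (w i)‖ := by
  have hgrad : (gradient fun w : EuclideanSpace ℝ ι => ∑ i, g i (w i)) =
      fun w => WithLp.toLp 2 fun i => g' i (w i) :=
    funext fun w => (hasGradientAt_sum_apply hg w).gradient
  rw [hgrad, (hasFDerivAt_toLp_apply hg' w).fderiv, Matrix.l2_opNorm_toEuclideanCLM,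
    Matrix.l2_opNorm_diagonal]

end SeparableSum

/-- The profile `h` with `s = √K₁`, i.e. `K₁ = s ^ 2`. Unlike `h` it puts the junction `-1 / s` in
the left branch, so that both junctions have the shape of `hasDerivAt_ite_le`. -/
noncomputable def valleyProfile (s x : ℝ) : ℝ :=
  if x ≤ -(1 / s) then exp (-s * x - 1) - 1 / 2
  else if x ≤ 1 / s then s ^ 2 / 2 * x ^ 2
  else exp (s * x - 1) - 1 / 2

noncomputable def valleyProfileDeriv (s x : ℝ) : ℝ :=
  if x ≤ -(1 / s) then -s * exp (-s * x - 1)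
  else if x ≤ 1 / s then s ^ 2 * x
  else s * exp (s * x - 1)

noncomputable def valleyProfileDeriv2 (s x : ℝ) : ℝ :=
  if x ≤ -(1 / s) then s ^ 2 * exp (-s * x - 1)
  else if x ≤ 1 / s then s ^ 2
  else s ^ 2 * exp (s * x - 1)

section ValleyProfile

variable {s : ℝ}

theorem valleyProfile_eq_ite_lt (hs : 0 < s) (x : ℝ) :
    valleyProfile s x =
      if x < -(1 / s) then exp (-s * x - 1) - 1 / 2
      else if x ≤ 1 / s then s ^ 2 / 2 * x ^ 2
      else exp (s * x - 1) - 1 / 2 := by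
  unfold valleyProfile
  by_cases hx : x = -(1 / s)
  · subst hx
    rw [if_pos le_rfl, if_neg (lt_irrefl _), if_pos (neg_le_self (one_div_nonneg.2 hs.le)),
      neg_mul_neg, mul_one_div_cancel hs.ne', sub_self, exp_zero]
    field_simp
    norm_num
  · simp only [le_iff_lt_or_eq, hx, or_false]

theorem hasDerivAt_valleyProfile (hs : 0 < s) (x : ℝ) :
    HasDerivAt (valleyProfile s) (valleyProfileDeriv s x) x := by
  have hc : -(1 / s) ≤ 1 / s := neg_le_self (one_div_nonneg.2 hs.le)
  have hj : s * (1 / s) = 1 := mul_one_div_cancel hs.ne'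
  refine hasDerivAt_ite_le (fun x => (hasDerivAt_exp_mul_sub_one (-s) x).sub_const (1 / 2))
    (hasDerivAt_ite_le (hasDerivAt_half_mul_sq (s ^ 2))
      (fun x => (hasDerivAt_exp_mul_sub_one s x).sub_const (1 / 2)) ?_ ?_) ?_ ?_ x
  all_goals simp only [if_pos hc, neg_mul_neg, hj, sub_self, exp_zero]
  all_goals field_simp
  all_goals norm_num

theorem hasDerivAt_valleyProfileDeriv (hs : 0 < s) (x : ℝ) :
    HasDerivAt (valleyProfileDeriv s) (valleyProfileDeriv2 s x) x := by
  have hc : -(1 / s) ≤ 1 / s := neg_le_self (one_div_nonneg.2 hs.le)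
  have hj : s * (1 / s) = 1 := mul_one_div_cancel hs.ne'
  refine hasDerivAt_ite_le (F' := fun x => s ^ 2 * exp (-s * x - 1))
    (fun x => ((hasDerivAt_exp_mul_sub_one (-s) x).const_mul (-s)).congr_deriv (by ring))
    (hasDerivAt_ite_le (F' := fun _ => s ^ 2) (G' := fun x => s ^ 2 * exp (s * x - 1))
      (fun _ => hasDerivAt_const_mul (s ^ 2))
      (fun x => (hasDerivAt_exp_mul_sub_one s x).const_mul s |>.congr_deriv (by ring)) ?_ ?_)
    ?_ ?_ x
  all_goals simp only [if_pos hc, neg_mul_neg, hj, sub_self, exp_zero]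
  all_goals field_simp

theorem continuous_valleyProfileDeriv2 (hs : 0 < s) : Continuous (valleyProfileDeriv2 s) := by
  refine Continuous.if_le (by fun_prop)
    (Continuous.if_le continuous_const (by fun_prop) continuous_id continuous_const ?_)
    continuous_id continuous_const ?_
  all_goals rintro x rfl
  all_goals simp [hs.ne', hs.le]

theorem deriv_valleyProfile (hs : 0 < s) : deriv (valleyProfile s) = valleyProfileDeriv s :=
  funext fun x => (hasDerivAt_valleyProfile hs x).deriv

theorem deriv_valleyProfileDeriv (hs : 0 < s) :
    deriv (valleyProfileDeriv s) = valleyProfileDeriv2 s :=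
  funext fun x => (hasDerivAt_valleyProfileDeriv hs x).deriv

theorem contDiff_valleyProfile (hs : 0 < s) : ContDiff ℝ 2 (valleyProfile s) := by
  rw [show (2 : WithTop ℕ∞) = 1 + 1 from rfl, contDiff_succ_iff_deriv, deriv_valleyProfile hs,
    contDiff_one_iff_deriv, deriv_valleyProfileDeriv hs]
  exact ⟨fun x => (hasDerivAt_valleyProfile hs x).differentiableAt, by simp,
    fun x => (hasDerivAt_valleyProfileDeriv hs x).differentiableAt,
    continuous_valleyProfileDeriv2 hs⟩

theorem valleyProfile_nonneg (hs : 0 < s) (x : ℝ) : 0 ≤ valleyProfile s x := by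
  unfold valleyProfile
  split_ifs with hleft hmid
  · have := one_le_exp_mul_sub_one hs (le_neg_of_le_neg hleft)
    rw [neg_mul_comm]
    linarith
  · positivity
  · linarith [one_le_exp_mul_sub_one hs (not_le.1 hmid).le]

theorem valleyProfile_zero (hs : 0 < s) : valleyProfile s 0 = 0 := by
  simp [valleyProfile, hs.le, not_le.2 hs]

theorem valleyProfileDeriv2_nonneg (x : ℝ) : 0 ≤ valleyProfileDeriv2 s x := by
  unfold valleyProfileDeriv2
  split_ifs <;> positivity

theorem valleyProfileDeriv2_le (x : ℝ) :
    valleyProfileDeriv2 s x ≤ s ^ 2 + s ^ 2 * valleyProfile s x := by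
  unfold valleyProfileDeriv2 valleyProfile
  split_ifs <;> nlinarith [sq_nonneg s, sq_nonneg (s ^ 2 * x)]

noncomputable def riverValley (s : ℝ) (w : EuclideanSpace ℝ (Fin 2)) : ℝ :=
  valleyProfile s (w 0) + s ^ 2 / 2 * (w 1) ^ 2

theorem riverValley_eq_sum (s : ℝ) :
    riverValley s = fun w => ∑ i, ![valleyProfile s, fun y => s ^ 2 / 2 * y ^ 2] i (w i) :=
  funext fun w => by simp [riverValley, Fin.sum_univ_two]

theorem contDiff_riverValley (hs : 0 < s) : ContDiff ℝ 2 (riverValley s) := by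
  rw [riverValley_eq_sum]
  refine contDiff_sum_apply (Fin.forall_fin_two.2 ⟨contDiff_valleyProfile hs, ?_⟩)
  simp only [Matrix.cons_val_one, Matrix.cons_val_zero]
  fun_prop

theorem valleyProfile_le_riverValley (w : EuclideanSpace ℝ (Fin 2)) :
    valleyProfile s (w 0) ≤ riverValley s w :=
  le_add_of_nonneg_right (by positivity)

theorem riverValley_nonneg (hs : 0 < s) (w : EuclideanSpace ℝ (Fin 2)) : 0 ≤ riverValley s w :=
  (valleyProfile_nonneg hs (w 0)).trans (valleyProfile_le_riverValley w)

theorem riverValley_zero (hs : 0 < s) : riverValley s 0 = 0 := by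
  simp [riverValley, valleyProfile_zero hs]

theorem norm_fderiv_gradient_riverValley (hs : 0 < s) (w : EuclideanSpace ℝ (Fin 2)) :
    ‖fderiv ℝ (gradient (riverValley s)) w‖ = max |valleyProfileDeriv2 s (w 0)| (s ^ 2) := by
  rw [riverValley_eq_sum, norm_fderiv_gradient_sum_apply
    (g' := ![valleyProfileDeriv s, fun y => s ^ 2 * y])
    (g'' := ![valleyProfileDeriv2 s, fun _ => s ^ 2])]
  · simp [Pi.norm_def, Fin.univ_succ]
  all_goals simp only [Fin.forall_fin_two, Matrix.cons_val_zero, Matrix.cons_val_one]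
  · exact ⟨hasDerivAt_valleyProfile hs, hasDerivAt_half_mul_sq (s ^ 2)⟩
  · exact ⟨hasDerivAt_valleyProfileDeriv hs, fun _ => hasDerivAt_const_mul (s ^ 2)⟩

theorem norm_fderiv_gradient_riverValley_le (hs : 0 < s) (w : EuclideanSpace ℝ (Fin 2)) :
    ‖fderiv ℝ (gradient (riverValley s)) w‖ ≤ s ^ 2 + s ^ 2 * riverValley s w := by
  rw [norm_fderiv_gradient_riverValley hs, abs_of_nonneg (valleyProfileDeriv2_nonneg _)]
  have hscale := mul_le_mul_of_nonneg_left (valleyProfile_le_riverValley (s := s) w) (sq_nonneg s)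
  refine max_le ?_ ?_
  · linarith [valleyProfileDeriv2_le (s := s) (w 0)]
  · exact le_add_of_nonneg_right (mul_nonneg (sq_nonneg s) (riverValley_nonneg hs w))

end ValleyProfile

/-- River-valley landscape. With `h` the piecewise
exponential/quadratic function and `f(x, y) = h(x) + (K₁/2)y²`, the function `f` is twice
continuously differentiable, nonnegative with infimum `0`, and
`‖∇²f(x,y)‖ = max{|h''(x)|, K₁} ≤ K₁ + K₁ f(x,y)`; i.e. `f` is `(1, K₁, K₁)`-smooth. -/
theorem statement17 (K1 : ℝ) (hK1 : 0 < K1)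
    (h : ℝ → ℝ)
    (hh : ∀ x : ℝ, h x =
      if x < -(1 / Real.sqrt K1) then Real.exp (-Real.sqrt K1 * x - 1) - 1 / 2
      else if x ≤ 1 / Real.sqrt K1 then K1 / 2 * x ^ 2
      else Real.exp (Real.sqrt K1 * x - 1) - 1 / 2)
    (f : EuclideanSpace ℝ (Fin 2) → ℝ)
    (hfdef : ∀ w : EuclideanSpace ℝ (Fin 2), f w = h (w 0) + K1 / 2 * (w 1) ^ 2) :
    ContDiff ℝ 2 f ∧
    (∀ w, 0 ≤ f w) ∧
    IsGLB (Set.range f) 0 ∧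
    (∀ w : EuclideanSpace ℝ (Fin 2),
      ‖fderiv ℝ (gradient f) w‖ = max |deriv (deriv h) (w 0)| K1 ∧
      ‖fderiv ℝ (gradient f) w‖ ≤ K1 + K1 * f w) := by
  obtain ⟨s, hs, rfl⟩ : ∃ s, 0 < s ∧ K1 = s ^ 2 :=
    ⟨√K1, sqrt_pos.2 hK1, (sq_sqrt hK1.le).symm⟩
  obtain rfl : h = valleyProfile s :=
    funext fun x => by rw [hh, sqrt_sq hs.le, valleyProfile_eq_ite_lt hs]
  obtain rfl : f = riverValley s := funext hfdef
  refine ⟨contDiff_riverValley hs, riverValley_nonneg hs,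
    IsLeast.isGLB ⟨⟨0, riverValley_zero hs⟩, forall_mem_range.2 (riverValley_nonneg hs)⟩,
    fun w => ⟨?_, norm_fderiv_gradient_riverValley_le hs w⟩⟩
  rw [norm_fderiv_gradient_riverValley hs, deriv_valleyProfile hs, deriv_valleyProfileDeriv hs]
end
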